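/- arXiv:1909.06834 — 2 statements merged into one kernel-verified Lean document; each statement's English description precedes it below -/
import Mathlib

section
/- Fix an integer r ≥ 3, reals ε > 0 and K ≥ 1, and a function δ : ℕ → (0,∞) with δ(n) → 0. For every σ > 0 and every k > 0 there is n₀ such that for all n ≥ n₀ divisible by r, all integers m with (1+ε)(n/r)·log n < m ≤ C(n,r), every r-subset Z of [n] and every x ∈ Z: the probability that H = H^r_{n,m} satisfies R(δ(n),K), the r-graph H − Z (on vertex set [n]∖Z) satisfies F(δ(n)), and yet more than σ·n vertices y ∈ [n]∖Z fail the inequality Φ( H − ((Z∖{x}) ∪ {y}) ) ≥ (1−σ)·Φ(H−Z)·d_H(x)/D_H, is at most n^{−k}. -/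
open Finset

/-- The set of perfect matchings of the `r`-graph `G` on vertex set `W`. -/
def pmSet (W : Finset ℕ) (G : Finset (Finset ℕ)) : Finset (Finset (Finset ℕ)) :=
  G.powerset.filter (fun M => (∀ A ∈ M, ∀ B ∈ M, A ≠ B → A ∩ B = ∅) ∧ M.biUnion id = W)

/-- The number of perfect matchings of `G` (denoted `Φ(G)`). -/
def pmCount (W : Finset ℕ) (G : Finset (Finset ℕ)) : ℕ := (pmSet W G).card

/-- All `r`-element subsets of `[n]`. -/
def Kn (n r : ℕ) : Finset (Finset ℕ) := Finset.powersetCard r (Finset.range n)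

/-- `G − Z`: the set of edges of `G` disjoint from `Z`. -/
def minus (G : Finset (Finset ℕ)) (Z : Finset ℕ) : Finset (Finset ℕ) :=
  G.filter (fun A => A ∩ Z = ∅)

/-- `Φ(G − Z)`, with `G − Z` regarded as an `r`-graph on `W \ Z`. -/
def phiSub (W : Finset ℕ) (G : Finset (Finset ℕ)) (Z : Finset ℕ) : ℕ :=
  pmCount (W \ Z) (minus G Z)

/-- Degree of `x` in `G`. -/
def deg (G : Finset (Finset ℕ)) (x : ℕ) : ℕ := (G.filter (fun A => x ∈ A)).card

/-- Codegree of `x, y` in `G`. -/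
def codeg (G : Finset (Finset ℕ)) (x y : ℕ) : ℕ :=
  (G.filter (fun A => x ∈ A ∧ y ∈ A)).card

/-- Average degree `D_G = r|G|/|W|`. -/
noncomputable def avgDeg (r : ℕ) (W : Finset ℕ) (G : Finset (Finset ℕ)) : ℝ :=
  ((r : ℝ) * G.card) / W.card

/-- Property `R(δ,K)`: all but at most `δ|W|` vertices have degree `(1±δ)D_G`,
every degree lies in `[D_G/K, K·D_G]`, and all codegrees are at most `δ·D_G`. -/
def propR (r : ℕ) (W : Finset ℕ) (G : Finset (Finset ℕ)) (δ K : ℝ) : Prop :=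
  ((W.filter (fun x =>
      ¬((1 - δ) * avgDeg r W G ≤ (deg G x : ℝ) ∧
        (deg G x : ℝ) ≤ (1 + δ) * avgDeg r W G))).card : ℝ) ≤ δ * W.card ∧
  (∀ x ∈ W, (deg G x : ℝ) ≤ K * avgDeg r W G ∧ avgDeg r W G / K ≤ (deg G x : ℝ)) ∧
  ∀ x ∈ W, ∀ y ∈ W, x ≠ y → (codeg G x y : ℝ) ≤ δ * avgDeg r W G

/-- Property `E(σ)`: all but at most `σ|G|` edges `A` satisfy
`Φ(G−A) = (1±σ)Φ(G)/D_G`. -/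
def propE (r : ℕ) (W : Finset ℕ) (G : Finset (Finset ℕ)) (σ : ℝ) : Prop :=
  ((G.filter (fun A =>
      ¬((1 - σ) * (pmCount W G : ℝ) / avgDeg r W G ≤ (phiSub W G A : ℝ) ∧
        (phiSub W G A : ℝ) ≤ (1 + σ) * (pmCount W G : ℝ) / avgDeg r W G))).card : ℝ) ≤
    σ * G.card

/-- Property `F(σ)`: all but at most `σ·C(|W|,r)` of the `r`-subsets `U` of `W`
satisfy `Φ(G−U) = (1±σ)Φ(G)/D_G`. -/
def propF (r : ℕ) (W : Finset ℕ) (G : Finset (Finset ℕ)) (σ : ℝ) : Prop :=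
  (((Finset.powersetCard r W).filter (fun U =>
      ¬((1 - σ) * (pmCount W G : ℝ) / avgDeg r W G ≤ (phiSub W G U : ℝ) ∧
        (phiSub W G U : ℝ) ≤ (1 + σ) * (pmCount W G : ℝ) / avgDeg r W G))).card : ℝ) ≤
    σ * (W.card.choose r)

/-- Property `C(δ,σ)`: for every `r`-subset `Z` of `W` with
`Φ(G−Z) ≥ Φ(G)e^{−δ|W|}` and every `x ∈ Z`, all but at most `σ|W|` vertices
`y ∈ W∖Z` satisfy `Φ(G−((Z∖{x})∪{y})) ≥ (1−σ)·Φ(G−Z)·d_G(x)/D_G`. -/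
def propC (r : ℕ) (W : Finset ℕ) (G : Finset (Finset ℕ)) (δ σ : ℝ) : Prop :=
  ∀ Z ∈ Finset.powersetCard r W,
    (pmCount W G : ℝ) * Real.exp (-δ * W.card) ≤ (phiSub W G Z : ℝ) →
    ∀ x ∈ Z,
      (((W \ Z).filter (fun y =>
          ¬((1 - σ) * (phiSub W G Z : ℝ) * (deg G x : ℝ) / avgDeg r W G ≤
            (phiSub W G (insert y (Z.erase x)) : ℝ)))).card : ℝ) ≤ σ * W.card

/-- Property `B(C)`: `Φ(G−A) ≤ C·Φ(G)/D_G` for every edge `A ∈ G`. -/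
def propB (r : ℕ) (W : Finset ℕ) (G : Finset (Finset ℕ)) (C : ℝ) : Prop :=
  ∀ A ∈ G, (phiSub W G A : ℝ) ≤ C * (pmCount W G : ℝ) / avgDeg r W G

/-- Property `A(δ)` for an `r`-graph `H` on `[n]` with `m` edges:
`log Φ(H) > log Φ₀ − ∑_{i=1}^{t} γ_i − δn`, where `t = C(n,r) − m`,
`γ_i = (n/r)/(C(n,r)−i+1)`, and `Φ₀ = n!/((n/r)!·(r!)^{n/r})`. -/
def propA (r n : ℕ) (H : Finset (Finset ℕ)) (δ : ℝ) : Prop :=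
  Real.log ((n.factorial : ℝ) /
      ((Nat.factorial (n / r) : ℝ) * (Nat.factorial r : ℝ) ^ (n / r)))
    - (∑ i ∈ Finset.Icc 1 (n.choose r - H.card),
        ((n : ℝ) / r) / ((n.choose r : ℝ) - (i : ℝ) + 1))
    - δ * n < Real.log (pmCount (Finset.range n) H)


/-!
Fix `Z` and `x` and condition on `G = H − Z`: the remaining edges of `H` form a uniformly
random set `T` of `s = m − |G|` edges meeting `Z`. Call an `r`-subset of `[n] ∖ Z` unbalanced
if it violates the estimate of `F(δ)`; there are at most `δ·C(n, r)` of them. Every perfect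
matching of `G − ((A ∖ {x}) ∪ {y})`, together with an edge `A ∋ x` avoiding `(Z ∖ {x}) ∪ {y}`,
is a perfect matching of `H − ((Z ∖ {x}) ∪ {y})`. So if `y` is low, then, by the degree and
codegree bounds of `R(δ, K)`, at least `σ·D_H/(2K)` edges `A ∋ x` of `H` have an unbalanced
swap `(A ∖ {x}) ∪ {y}`. Thus more than `σn` low vertices force `∑_{A ∈ T} w(A) > t = σ²rm/(2K)`,
where `w(A)` is the number of `y` making the swap of `A` unbalanced. The weights are at most `n`,
and their total is `O(δ·C(n, r))`. Comparing with the `q`-th factorial moment, `q ≈ t/(2n)`,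
gives probability at most `θ^q` with `θ = O(δ)`. Since `m > (n/r) log n`, `q` is of order
`log n`, so this is below `n^{-k}` once `δ(n)` is small enough.
-/

/-! ### Extending perfect matchings -/

lemma minus_minus (G : Finset (Finset ℕ)) (X Y : Finset ℕ) :
    minus (minus G X) Y = minus G (X ∪ Y) := by
  ext A
  simp only [minus, mem_filter, inter_union_distrib_left, union_eq_empty, and_assoc]

lemma phiSub_sdiff_minus (W : Finset ℕ) (G : Finset (Finset ℕ)) (X Y : Finset ℕ) :
    phiSub (W \ X) (minus G X) Y = phiSub W G (X ∪ Y) := by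
  rw [phiSub, phiSub, minus_minus, sdiff_sdiff_left]
  rfl

lemma sum_phiSub_le_pmCount {W : Finset ℕ} {G 𝒜 : Finset (Finset ℕ)} {x : ℕ}
    (h𝒜 : ∀ A ∈ 𝒜, A ∈ G ∧ A ⊆ W ∧ x ∈ A) :
    ∑ A ∈ 𝒜, phiSub W G A ≤ pmCount W G := by
  simp only [phiSub, pmCount, ← card_sigma]
  have hM : ∀ A ∈ 𝒜, ∀ M ∈ pmSet (W \ A) (minus G A), ∀ e ∈ M, e ∈ G ∧ e ∩ A = ∅ :=
    fun A _ M hM e he => by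
      simp only [pmSet, mem_filter, mem_powerset] at hM
      simpa [minus] using hM.1 he
  have hA_notMem : ∀ A ∈ 𝒜, ∀ M ∈ pmSet (W \ A) (minus G A), A ∉ M := fun A hA M hMA hAM => by
    have := (hM A hA M hMA A hAM).2
    rw [inter_self] at this
    exact notMem_empty x (this ▸ (h𝒜 A hA).2.2)
  refine card_le_card_of_injOn (fun p => insert p.1 p.2) ?_ ?_
  · rintro ⟨A, M⟩ hAM
    simp only [coe_sigma, Set.mem_sigma_iff, mem_coe] at hAM
    obtain ⟨hA, hMA⟩ := hAM
    obtain ⟨hAG, hAW, -⟩ := h𝒜 A hA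
    have hMA' := hMA
    simp only [pmSet, mem_filter, mem_powerset] at hMA'
    simp only [mem_coe, pmSet, mem_filter, mem_powerset]
    refine ⟨insert_subset hAG fun e he => (hM A hA M hMA e he).1, ?_, ?_⟩
    · simp only [mem_insert]
      rintro e (he | he) f (hf | hf) hef
      · exact absurd (he.trans hf.symm) hef
      · rw [he, inter_comm]; exact (hM A hA M hMA f hf).2
      · rw [hf]; exact (hM A hA M hMA e he).2
      · exact hMA'.2.1 e he f hf hef
    · rw [biUnion_insert, hMA'.2.2, id, union_sdiff_of_subset hAW]
  · rintro ⟨A, M⟩ hAM ⟨A', M'⟩ hAM' heq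
    simp only [coe_sigma, Set.mem_sigma_iff, mem_coe] at hAM hAM' heq
    -- two edges through `x` cannot lie in a common matching
    have hAA' : A = A' := by
      have hA' : A' ∈ insert A M := heq ▸ mem_insert_self A' M'
      rcases mem_insert.1 hA' with h | h
      · exact h.symm
      · have := (hM A hAM.1 M hAM.2 A' h).2
        exact absurd (this ▸ mem_inter.2 ⟨(h𝒜 A' hAM'.1).2.2, (h𝒜 A hAM.1).2.2⟩) (notMem_empty x)
    subst hAA'
    have hMM' : M = M' := by
      simpa [erase_insert (hA_notMem A hAM.1 M hAM.2), erase_insert (hA_notMem A hAM'.1 M' hAM'.2)]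
        using congrArg (·.erase A) heq
    rw [hMM']

lemma nonempty_of_pmCount_pos {W : Finset ℕ} {G : Finset (Finset ℕ)} (hW : W.Nonempty)
    (hG : 0 < pmCount W G) : G.Nonempty := by
  obtain ⟨M, hM⟩ := card_pos.1 hG
  simp only [pmSet, mem_filter, mem_powerset] at hM
  obtain ⟨v, hv⟩ := hW
  rw [← hM.2.2, mem_biUnion] at hv
  obtain ⟨A, hA, -⟩ := hv
  exact ⟨A, hM.1 hA⟩

/-! ### Factorial moments of weighted subsets -/

section TupleWeight

variable {α : Type*} [DecidableEq α] (w : α → ℕ)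

/-- `tupleWeight w q T` is the sum of `w a₁ * ⋯ * w a_q` over ordered `q`-tuples of distinct
elements of `T`. -/
def tupleWeight : ℕ → Finset α → ℕ
  | 0, _ => 1
  | q + 1, T => ∑ a ∈ T, w a * tupleWeight q (T.erase a)

lemma sub_pow_le_tupleWeight {b : ℕ} (hw : ∀ a, w a ≤ b) (q : ℕ) (T : Finset α) :
    (∑ a ∈ T, w a - q * b) ^ q ≤ tupleWeight w q T := by
  induction q generalizing T with
  | zero => simp [tupleWeight]
  | succ q ih =>
    set X := ∑ a ∈ T, w a
    have herase : ∀ a ∈ T, X - (q + 1) * b ≤ ∑ a' ∈ T.erase a, w a' - q * b := fun a ha => by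
      have := sum_erase_add T w ha
      have := hw a
      rw [add_one_mul]
      omega
    calc (X - (q + 1) * b) ^ (q + 1) ≤ X * (X - (q + 1) * b) ^ q := by
          rw [pow_succ']; exact Nat.mul_le_mul_right _ (Nat.sub_le _ _)
      _ = ∑ a ∈ T, w a * (X - (q + 1) * b) ^ q := sum_mul _ _ _
      _ ≤ ∑ a ∈ T, w a * tupleWeight w q (T.erase a) := sum_le_sum fun a ha =>
          Nat.mul_le_mul_left _ ((Nat.pow_le_pow_left (herase a ha) q).trans (ih _))
      _ = tupleWeight w (q + 1) T := rfl

lemma sum_powersetCard_erase_le (f : Finset α → ℕ) (E : Finset α) (s : ℕ) {a : α} :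
    ∑ T ∈ powersetCard s E with a ∈ T, f (T.erase a) ≤
      ∑ T ∈ powersetCard (s - 1) (E.erase a), f T := by
  refine (sum_image (f := f) (g := fun T : Finset α => T.erase a)
    fun T hT T' hT' h => ?_).symm.le.trans (sum_le_sum_of_subset fun T' hT' => ?_)
  · rw [mem_coe, mem_filter] at hT hT'
    rw [← insert_erase hT.2, ← insert_erase hT'.2]
    exact congrArg (insert a) h
  obtain ⟨T, hT, rfl⟩ := mem_image.1 hT'
  rw [mem_filter, mem_powersetCard] at hT
  rw [mem_powersetCard, card_erase_of_mem hT.2, hT.1.2]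
  exact ⟨erase_subset_erase a hT.1.1, rfl⟩

lemma sum_tupleWeight_powersetCard_le (q : ℕ) (E : Finset α) (s : ℕ) :
    ∑ T ∈ powersetCard s E, tupleWeight w q T ≤
      (∑ a ∈ E, w a) ^ q * (#E - q).choose (s - q) := by
  induction q generalizing E s with
  | zero => simp [tupleWeight]
  | succ q ih =>
    have hswap : ∑ T ∈ powersetCard s E, tupleWeight w (q + 1) T =
        ∑ a ∈ E, w a * ∑ T ∈ powersetCard s E with a ∈ T, tupleWeight w q (T.erase a) := by
      simp only [tupleWeight, mul_sum]
      refine sum_comm' fun T a => ?_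
      simp only [mem_filter, mem_powersetCard]
      exact ⟨fun h => ⟨⟨h.1, h.2⟩, h.1.1 h.2⟩, fun h => h.1⟩
    calc ∑ T ∈ powersetCard s E, tupleWeight w (q + 1) T
        ≤ ∑ a ∈ E, w a * ((∑ a ∈ E, w a) ^ q * (#E - (q + 1)).choose (s - (q + 1))) := by
          rw [hswap]
          refine sum_le_sum fun a ha => Nat.mul_le_mul_left _ ?_
          refine (sum_powersetCard_erase_le _ E s).trans ((ih _ _).trans ?_)
          rw [card_erase_of_mem ha, Nat.sub_sub, Nat.sub_sub, add_comm 1]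
          exact Nat.mul_le_mul_right _
            (Nat.pow_le_pow_left (sum_le_sum_of_subset (erase_subset a E)) q)
      _ = (∑ a ∈ E, w a) ^ (q + 1) * (#E - (q + 1)).choose (s - (q + 1)) := by
          rw [← sum_mul, pow_succ]; ring

end TupleWeight

open Nat in
lemma Nat.choose_sub_mul_pow_le {N s q : ℕ} (hqs : q ≤ s) (hsN : s ≤ N) :
    (N - q).choose (s - q) * (N - q) ^ q ≤ N.choose s * s ^ q := by
  have hchoose := Nat.choose_mul (n := N) hqs
  have hpos : 0 < N.descFactorial q := Nat.descFactorial_pos.2 (hqs.trans hsN)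
  refine Nat.le_of_mul_le_mul_right ?_ hpos
  calc (N - q).choose (s - q) * (N - q) ^ q * N.descFactorial q
      = q ! * (N - q) ^ q * (N.choose q * (N - q).choose (s - q)) := by
        rw [Nat.descFactorial_eq_factorial_mul_choose]; ring
    _ = N.choose s * s.descFactorial q * (N - q) ^ q := by
        rw [← hchoose, Nat.descFactorial_eq_factorial_mul_choose]; ring
    _ ≤ N.choose s * s ^ q * N.descFactorial q := by
        rw [mul_assoc, mul_assoc]
        refine Nat.mul_le_mul_left _ (Nat.mul_le_mul (Nat.descFactorial_le_pow s q) ?_)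
        exact (Nat.pow_le_pow_left (by omega) q).trans (Nat.pow_sub_le_descFactorial N q)

lemma card_filter_sum_gt_mul_pow_le {α : Type*} [DecidableEq α] (w : α → ℕ) {b : ℕ}
    (hw : ∀ a, w a ≤ b) {E : Finset α} {s q : ℕ} (hqs : q ≤ s) (hsE : s ≤ #E) {t : ℝ}
    (ht : 0 ≤ t) (hq : (q * b : ℝ) ≤ 3 / 4 * t) :
    (#{T ∈ powersetCard s E | t < ∑ a ∈ T, (w a : ℝ)} : ℝ) * (t / 4 * (#E - q)) ^ q ≤
      (#E).choose s * ((∑ a ∈ E, w a : ℕ) * s) ^ q := by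
  have hheavy : ∀ T ∈ {T ∈ powersetCard s E | t < ∑ a ∈ T, (w a : ℝ)},
      (t / 4) ^ q ≤ (tupleWeight w q T : ℝ) := fun T hT => by
    have hX := (mem_filter.1 hT).2
    have hqb : q * b ≤ ∑ a ∈ T, w a := by
      rw [← Nat.cast_le (α := ℝ)]; push_cast; linarith
    calc (t / 4) ^ q ≤ ((∑ a ∈ T, w a - q * b : ℕ) : ℝ) ^ q := by
          gcongr
          push_cast [Nat.cast_sub hqb]
          linarith
      _ ≤ _ := by exact_mod_cast sub_pow_le_tupleWeight w hw q T
  have hmoment : (#{T ∈ powersetCard s E | t < ∑ a ∈ T, (w a : ℝ)} : ℝ) * (t / 4) ^ q ≤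
      (∑ a ∈ E, w a : ℕ) ^ q * ((#E - q).choose (s - q) : ℕ) := by
    calc _ ≤ ∑ T ∈ powersetCard s E with t < ∑ a ∈ T, (w a : ℝ), (tupleWeight w q T : ℝ) := by
          rw [← nsmul_eq_mul, ← sum_const]; exact sum_le_sum hheavy
      _ ≤ ∑ T ∈ powersetCard s E, (tupleWeight w q T : ℝ) :=
          sum_le_sum_of_subset_of_nonneg (filter_subset _ _) fun _ _ _ => Nat.cast_nonneg _
      _ ≤ _ := by exact_mod_cast sum_tupleWeight_powersetCard_le w q E s
  have hratio : (((#E - q).choose (s - q) : ℕ) : ℝ) * ((#E : ℝ) - q) ^ q ≤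
      (#E).choose s * (s : ℝ) ^ q := by
    rw [← Nat.cast_sub (hqs.trans hsE)]
    exact_mod_cast Nat.choose_sub_mul_pow_le hqs hsE
  have hEq : (0 : ℝ) ≤ (#E : ℝ) - q := by
    rw [sub_nonneg]; exact_mod_cast hqs.trans hsE
  calc _ = (#{T ∈ powersetCard s E | t < ∑ a ∈ T, (w a : ℝ)} : ℝ) * (t / 4) ^ q *
        ((#E : ℝ) - q) ^ q := by rw [mul_pow, mul_assoc]
    _ ≤ (∑ a ∈ E, w a : ℕ) ^ q * ((((#E - q).choose (s - q) : ℕ) : ℝ) * ((#E : ℝ) - q) ^ q) := by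
        rw [← mul_assoc]; gcongr
    _ ≤ (∑ a ∈ E, w a : ℕ) ^ q * ((#E).choose s * (s : ℝ) ^ q) := by gcongr
    _ = _ := by ring

lemma card_filter_sum_gt_le {α : Type*} [DecidableEq α] (w : α → ℕ) {b : ℕ}
    (hw : ∀ a, w a ≤ b) {E : Finset α} {s q : ℕ} (hqs : q < s) (hsE : s ≤ #E) {t θ : ℝ}
    (ht : 0 < t) (hq : (q * b : ℝ) ≤ 3 / 4 * t)
    (hθ : ((∑ a ∈ E, w a : ℕ) : ℝ) * s ≤ θ * (t / 4 * (#E - q))) :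
    (#{T ∈ powersetCard s E | t < ∑ a ∈ T, (w a : ℝ)} : ℝ) ≤ θ ^ q * (#E).choose s := by
  have hP : 0 < (t / 4 * (#E - q)) ^ q := by
    have : (q : ℝ) < #E := by exact_mod_cast hqs.trans_le hsE
    have : 0 < t / 4 * (#E - q) := by apply mul_pos <;> linarith
    positivity
  refine le_of_mul_le_mul_right ?_ hP
  calc _ ≤ (#E).choose s * (((∑ a ∈ E, w a : ℕ) : ℝ) * s) ^ q :=
        card_filter_sum_gt_mul_pow_le w hw hqs.le hsE ht.le hq
    _ ≤ (#E).choose s * (θ * (t / 4 * (#E - q))) ^ q := by gcongr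
    _ = θ ^ q * (#E).choose s * (t / 4 * (#E - q)) ^ q := by rw [mul_pow]; ring

lemma card_filter_le_mul_of_fiberwise {ι κ : Type*} [DecidableEq κ] {S : Finset ι}
    {p : ι → Prop} [DecidablePred p] (f : ι → κ) {θ : ℝ}
    (h : ∀ g, (#{i ∈ S | p i ∧ f i = g} : ℝ) ≤ θ * #{i ∈ S | f i = g}) :
    (#{i ∈ S | p i} : ℝ) ≤ θ * #S := by
  rw [card_eq_sum_card_fiberwise (t := S.image f)
    (fun i hi => mem_image_of_mem f (mem_filter.1 hi).1), card_eq_sum_card_image f S]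
  push_cast
  rw [mul_sum]
  refine sum_le_sum fun g _ => ?_
  rw [filter_filter]
  exact h g

section Split

variable {α : Type*} {p : α → Prop} [DecidablePred p] {U G : Finset α} {m : ℕ}

lemma filter_not_mem_powersetCard {H : Finset α} (hH : H ∈ powersetCard m U) :
    H.filter (¬p ·) ∈ powersetCard (m - #(H.filter p)) (U.filter (¬p ·)) := by
  obtain ⟨hHU, rfl⟩ := mem_powersetCard.1 hH
  refine mem_powersetCard.2 ⟨filter_subset_filter _ hHU, ?_⟩
  exact Nat.eq_sub_of_add_eq' (card_filter_add_card_filter_not p)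

lemma eq_of_filter_eq_of_filter_not_eq [DecidableEq α] {H H' : Finset α}
    (hp : H.filter p = H'.filter p) (hnp : H.filter (¬p ·) = H'.filter (¬p ·)) : H = H' := by
  rw [← filter_union_filter_not_eq p H, ← filter_union_filter_not_eq p H', hp, hnp]

lemma choose_le_card_filter_eq [DecidableEq α] (hG : G ⊆ U.filter p) (hGm : #G ≤ m) :
    (#(U.filter (¬p ·))).choose (m - #G) ≤ #{H ∈ powersetCard m U | H.filter p = G} := by
  have hGp : ∀ a ∈ G, p a := fun a ha => (mem_filter.1 (hG ha)).2
  have hunion : ∀ T ⊆ U.filter (¬p ·), (G ∪ T).filter p = G ∧ (G ∪ T).filter (¬p ·) = T :=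
    fun T hT => by
      have hTp : ∀ a ∈ T, ¬p a := fun a ha => (mem_filter.1 (hT ha)).2
      rw [filter_union, filter_union, filter_true_of_mem hGp, filter_false_of_mem hTp,
        filter_false_of_mem fun a ha => not_not.2 (hGp a ha), filter_true_of_mem hTp,
        union_empty, empty_union]
      exact ⟨rfl, rfl⟩
  rw [← card_powersetCard]
  refine card_le_card_of_injOn (G ∪ ·) (fun T hT => ?_) fun T hT T' hT' h => ?_
  · rw [mem_coe, mem_powersetCard] at hT
    have hdisj : Disjoint G T := disjoint_left.2 fun a haG haT =>
      (mem_filter.1 (hT.1 haT)).2 (hGp a haG)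
    refine mem_filter.2 ⟨mem_powersetCard.2 ⟨?_, ?_⟩, (hunion T hT.1).1⟩
    · exact union_subset (hG.trans (filter_subset _ _)) (hT.1.trans (filter_subset _ _))
    · rw [card_union_of_disjoint hdisj, hT.2]; omega
  · rw [mem_coe, mem_powersetCard] at hT hT'
    rw [← (hunion T hT.1).2, ← (hunion T' hT'.1).2]
    exact congrArg _ h

end Split

/-! ### Swapping `x` for `y` -/

noncomputable def unbalancedSets (r : ℕ) (W : Finset ℕ) (G : Finset (Finset ℕ)) (σ : ℝ) :
    Finset (Finset ℕ) :=
  (powersetCard r W).filter fun U =>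
    ¬((1 - σ) * (pmCount W G : ℝ) / avgDeg r W G ≤ (phiSub W G U : ℝ) ∧
      (phiSub W G U : ℝ) ≤ (1 + σ) * (pmCount W G : ℝ) / avgDeg r W G)

def swapCount (B : Finset (Finset ℕ)) (Y : Finset ℕ) (x : ℕ) (A : Finset ℕ) : ℕ :=
  #{y ∈ Y | x ∈ A ∧ y ∉ A ∧ insert y (A.erase x) ∈ B}

lemma swapCount_le_card (B : Finset (Finset ℕ)) (Y : Finset ℕ) (x : ℕ) (A : Finset ℕ) :
    swapCount B Y x A ≤ #Y :=
  card_filter_le _ _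

lemma swapCount_eq_zero_of_notMem {B : Finset (Finset ℕ)} {Y : Finset ℕ} {x : ℕ}
    {A : Finset ℕ} (hxA : x ∉ A) : swapCount B Y x A = 0 := by
  rw [swapCount, card_eq_zero, filter_eq_empty_iff]
  exact fun _ _ h => hxA h.1

lemma sum_card_swap_eq_sum_swapCount (B H : Finset (Finset ℕ)) (Y : Finset ℕ) (x : ℕ) :
    ∑ y ∈ Y, #{A ∈ H | x ∈ A ∧ y ∉ A ∧ insert y (A.erase x) ∈ B} =
      ∑ A ∈ H, swapCount B Y x A := by
  simp only [swapCount, card_filter]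
  exact sum_comm

lemma sum_swapCount_le {B : Finset (Finset ℕ)} {r : ℕ} (hB : ∀ U ∈ B, #U = r)
    (E : Finset (Finset ℕ)) (Y : Finset ℕ) (x : ℕ) :
    ∑ A ∈ E, swapCount B Y x A ≤ r * #B := by
  calc ∑ A ∈ E, swapCount B Y x A
      = #(E.sigma fun A => {y ∈ Y | x ∈ A ∧ y ∉ A ∧ insert y (A.erase x) ∈ B}) :=
        (card_sigma _ _).symm
    _ ≤ #(B.sigma id) := by
        refine card_le_card_of_injOn (fun p => ⟨insert p.2 (p.1.erase x), p.2⟩) ?_ ?_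
        · rintro ⟨A, y⟩ h
          simp only [coe_sigma, Set.mem_sigma_iff, mem_coe, mem_filter] at h
          simpa using h.2.2.2.2
        · rintro ⟨A, y⟩ h ⟨A', y'⟩ h' heq
          simp only [coe_sigma, Set.mem_sigma_iff, mem_coe, mem_filter] at h h'
          simp only [Sigma.mk.injEq, heq_eq_eq] at heq
          obtain ⟨hU, rfl⟩ := heq
          have hA : A.erase x = A'.erase x := by
            rw [← erase_insert (fun h'' => h.2.2.2.1 (mem_of_mem_erase h'')),
              ← erase_insert (fun h'' => h'.2.2.2.1 (mem_of_mem_erase h'')), hU]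
          rw [← insert_erase h.2.2.1, ← insert_erase h'.2.2.1, hA]
    _ = r * #B := by
        rw [card_sigma, sum_congr rfl fun U hU => (congrArg card (id_eq U)).trans (hB U hU),
          sum_const, smul_eq_mul, mul_comm]

lemma deg_le_add_codeg (H B : Finset (Finset ℕ)) (Z : Finset ℕ) (x y : ℕ) :
    deg H x ≤ #{A ∈ H | x ∈ A ∧ A ∩ Z.erase x = ∅ ∧ y ∉ A ∧ insert y (A.erase x) ∉ B} +
      ∑ z ∈ Z.erase x, codeg H x z + codeg H x y +
      #{A ∈ H | x ∈ A ∧ y ∉ A ∧ insert y (A.erase x) ∈ B} := by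
  have hcover : {A ∈ H | x ∈ A} ⊆
      {A ∈ H | x ∈ A ∧ A ∩ Z.erase x = ∅ ∧ y ∉ A ∧ insert y (A.erase x) ∉ B} ∪
      (Z.erase x).biUnion (fun z => {A ∈ H | x ∈ A ∧ z ∈ A}) ∪ {A ∈ H | x ∈ A ∧ y ∈ A} ∪
      {A ∈ H | x ∈ A ∧ y ∉ A ∧ insert y (A.erase x) ∈ B} := fun A hA => by
    obtain ⟨hAH, hxA⟩ := mem_filter.1 hA
    simp only [mem_union, mem_filter, mem_biUnion]
    by_cases hZ : A ∩ Z.erase x = ∅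
    · by_cases hy : y ∈ A
      · exact Or.inl (Or.inr ⟨hAH, hxA, hy⟩)
      · by_cases hB : insert y (A.erase x) ∈ B
        · exact Or.inr ⟨hAH, hxA, hy, hB⟩
        · exact Or.inl (Or.inl (Or.inl ⟨hAH, hxA, hZ, hy, hB⟩))
    · obtain ⟨z, hz⟩ := nonempty_iff_ne_empty.2 hZ
      exact Or.inl (Or.inl (Or.inr ⟨z, (mem_inter.1 hz).2, hAH, hxA, (mem_inter.1 hz).1⟩))
  refine (card_le_card hcover).trans <| (card_union_le _ _).trans <| add_le_add_left ?_ _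
  refine (card_union_le _ _).trans <| add_le_add_left ?_ _
  exact (card_union_le _ _).trans <| add_le_add_right card_biUnion_le _

lemma union_insert_erase_comm {Z A : Finset ℕ} {x : ℕ} (hxZ : x ∈ Z) (hxA : x ∈ A) (y : ℕ) :
    Z ∪ insert y (A.erase x) = insert y (Z.erase x) ∪ A := by
  ext v
  simp only [mem_union, mem_insert, mem_erase]
  by_cases hv : v = x
  · subst hv; tauto
  · tauto

lemma card_mul_le_phiSub_swap {n r : ℕ} {H : Finset (Finset ℕ)} {Z : Finset ℕ} {x y : ℕ}
    {δ : ℝ} (hH : H ⊆ Kn n r) (hx : x ∈ Z) (hy : y ∈ range n \ Z) :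
    (#{A ∈ H | x ∈ A ∧ A ∩ Z.erase x = ∅ ∧ y ∉ A ∧
        insert y (A.erase x) ∉ unbalancedSets r (range n \ Z) (minus H Z) δ} : ℝ) *
      ((1 - δ) * pmCount (range n \ Z) (minus H Z) / avgDeg r (range n \ Z) (minus H Z)) ≤
      phiSub (range n) H (insert y (Z.erase x)) := by
  set Z' := insert y (Z.erase x)
  set 𝒜 := {A ∈ H | x ∈ A ∧ A ∩ Z.erase x = ∅ ∧ y ∉ A ∧
    insert y (A.erase x) ∉ unbalancedSets r (range n \ Z) (minus H Z) δ}
  set c := (1 - δ) * pmCount (range n \ Z) (minus H Z) / avgDeg r (range n \ Z) (minus H Z)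
  have hA : ∀ A ∈ 𝒜, (A ∈ minus H Z' ∧ A ⊆ range n \ Z' ∧ x ∈ A) ∧
      c ≤ phiSub (range n \ Z') (minus H Z') A := fun A hA' => by
    obtain ⟨hAH, hxA, hAZ, hyA, hAB⟩ := mem_filter.1 hA'
    obtain ⟨hAn, hAr⟩ := mem_powersetCard.1 (hH hAH)
    have hAZ' : A ∩ Z' = ∅ := by
      refine eq_empty_iff_forall_notMem.2 fun a ha => ?_
      obtain ⟨haA, ha⟩ := mem_inter.1 ha
      rcases mem_insert.1 ha with rfl | haZ
      · exact hyA haA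
      · exact notMem_empty a (hAZ ▸ mem_inter.2 ⟨haA, haZ⟩)
    have hU : insert y (A.erase x) ∈ powersetCard r (range n \ Z) := by
      refine mem_powersetCard.2 ⟨insert_subset hy fun a ha => ?_, ?_⟩
      · obtain ⟨hax, haA⟩ := mem_erase.1 ha
        refine mem_sdiff.2 ⟨hAn haA, fun haZ => ?_⟩
        exact notMem_empty a (hAZ ▸ mem_inter.2 ⟨haA, mem_erase.2 ⟨hax, haZ⟩⟩)
      · rw [card_insert_of_notMem (fun h => hyA (mem_of_mem_erase h)), card_erase_of_mem hxA, hAr]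
        exact Nat.sub_add_cancel (card_pos.2 ⟨x, hxA⟩ |>.trans_eq hAr)
    refine ⟨⟨mem_filter.2 ⟨hAH, hAZ'⟩, fun a ha => mem_sdiff.2 ⟨hAn ha, fun haZ' =>
      notMem_empty a (hAZ' ▸ mem_inter.2 ⟨ha, haZ'⟩)⟩, hxA⟩, ?_⟩
    have hbal := not_not.1 fun h => hAB (mem_filter.2 ⟨hU, h⟩)
    rw [phiSub_sdiff_minus, ← union_insert_erase_comm hx hxA, ← phiSub_sdiff_minus]
    exact hbal.1
  calc (#𝒜 : ℝ) * c = ∑ _A ∈ 𝒜, c := by rw [sum_const, nsmul_eq_mul]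
    _ ≤ ∑ A ∈ 𝒜, (phiSub (range n \ Z') (minus H Z') A : ℝ) :=
        sum_le_sum fun A hA' => (hA A hA').2
    _ ≤ phiSub (range n) H Z' := by
        exact_mod_cast sum_phiSub_le_pmCount fun A hA' => (hA A hA').1

noncomputable def lowVertices (r n : ℕ) (H : Finset (Finset ℕ)) (Z : Finset ℕ) (x : ℕ)
    (σ : ℝ) : Finset ℕ :=
  (range n \ Z).filter fun y =>
    ¬((1 - σ) * (phiSub (range n) H Z : ℝ) * (deg H x : ℝ) / avgDeg r (range n) H ≤
      (phiSub (range n) H (insert y (Z.erase x)) : ℝ))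

lemma avgDeg_nonneg (r : ℕ) (W : Finset ℕ) (G : Finset (Finset ℕ)) : 0 ≤ avgDeg r W G := by
  unfold avgDeg; positivity

lemma pos_of_mem_lowVertices {r n : ℕ} {H : Finset (Finset ℕ)} {Z : Finset ℕ} {x y : ℕ} {σ : ℝ}
    (hy : y ∈ lowVertices r n H Z x σ) :
    0 < (phiSub (range n) H Z : ℝ) ∧ 0 < avgDeg r (range n) H := by
  have hlow := not_le.1 (mem_filter.1 hy).2
  have hpos := (Nat.cast_nonneg _).trans_lt hlow
  refine ⟨(Nat.cast_nonneg _).lt_of_ne fun h => ?_,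
    (avgDeg_nonneg _ _ _).lt_of_ne fun h => ?_⟩ <;> simp [← h] at hpos

lemma avgDeg_minus_le {n r : ℕ} (H : Finset (Finset ℕ)) {Z : Finset ℕ} {σ : ℝ} (hr : 0 < r)
    (hZ : Z ∈ powersetCard r (range n)) (hσ : σ ≤ 1 / 2) (hn : 32 * r ≤ σ * n) :
    avgDeg r (range n \ Z) (minus H Z) ≤ (1 + σ / 16) * avgDeg r (range n) H := by
  obtain ⟨hZn, hZr⟩ := mem_powersetCard.1 hZ
  have hrR : (1 : ℝ) ≤ r := by exact_mod_cast hr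
  have hn' : (r : ℝ) < n := by nlinarith
  have hcard : (#(range n \ Z) : ℝ) = n - r := by
    rw [card_sdiff_of_subset hZn, card_range, hZr, Nat.cast_sub (by exact_mod_cast hn'.le)]
  have hGH : (r * #(minus H Z) : ℝ) ≤ r * #H := by
    gcongr; exact filter_subset _ H
  rw [avgDeg, avgDeg, hcard, card_range, div_le_iff₀ (by linarith)]
  calc (r * #(minus H Z) : ℝ) ≤ r * #H / n * n := by
        rw [div_mul_cancel₀ _ (by linarith)]; exact hGH
    _ ≤ r * #H / n * ((1 + σ / 16) * (n - r)) := by gcongr; nlinarith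
    _ = _ := by ring

section Swap

variable {n r : ℕ} {H : Finset (Finset ℕ)} {Z : Finset ℕ} {x y : ℕ} {K σ δ : ℝ}

lemma card_swap_balanced_le (hσ : 0 < σ) (hσ2 : σ ≤ 1 / 2) (hδ : δ ≤ σ / 32) (hr : 0 < r)
    (hn : 32 * r ≤ σ * n) (hH : H ⊆ Kn n r) (hZ : Z ∈ powersetCard r (range n)) (hx : x ∈ Z)
    (hy : y ∈ lowVertices r n H Z x σ) :
    (#{A ∈ H | x ∈ A ∧ A ∩ Z.erase x = ∅ ∧ y ∉ A ∧
        insert y (A.erase x) ∉ unbalancedSets r (range n \ Z) (minus H Z) δ} : ℝ) ≤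
      (1 - 3 * σ / 4) * deg H x := by
  set a : ℝ := ((#{A ∈ H | x ∈ A ∧ A ∩ Z.erase x = ∅ ∧ y ∉ A ∧
    insert y (A.erase x) ∉ unbalancedSets r (range n \ Z) (minus H Z) δ} : ℕ) : ℝ)
  obtain ⟨hΦ, hD⟩ := pos_of_mem_lowVertices hy
  obtain ⟨hyW, hlow⟩ := mem_filter.1 hy
  have hD' : 0 < avgDeg r (range n \ Z) (minus H Z) := by
    obtain ⟨A, hA⟩ := nonempty_of_pmCount_pos ⟨y, hyW⟩ (by exact_mod_cast hΦ)
    exact div_pos (mul_pos (by exact_mod_cast hr) (by exact_mod_cast card_pos.2 ⟨A, hA⟩))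
      (by exact_mod_cast card_pos.2 ⟨y, hyW⟩)
  have hmatch : a * ((1 - δ) * (phiSub (range n) H Z : ℝ) /
      ((1 + σ / 16) * avgDeg r (range n) H)) <
      (1 - σ) * (phiSub (range n) H Z : ℝ) * deg H x / avgDeg r (range n) H := by
    refine lt_of_le_of_lt ?_ (not_le.1 hlow)
    refine le_trans ?_ (card_mul_le_phiSub_swap (δ := δ) hH hx hyW)
    have : 0 ≤ 1 - δ := by linarith
    gcongr
    · exact le_rfl
    · exact avgDeg_minus_le H hr hZ hσ2 hn
  rw [mul_div_assoc', div_lt_div_iff₀ (by positivity) hD] at hmatch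
  have hd : (0 : ℝ) ≤ deg H x := Nat.cast_nonneg _
  have ha : 0 ≤ a := Nat.cast_nonneg _
  have hΦD := mul_pos hΦ hD
  have hswap : a * (1 - δ) < (1 - σ) * (1 + σ / 16) * deg H x := by nlinarith
  -- `(1 - σ) * (1 + σ / 16) ≤ (1 - 3 * σ / 4) * (1 - σ / 32)` for `0 < σ ≤ 1 / 2`
  nlinarith [mul_nonneg ha (by linarith : (0 : ℝ) ≤ σ / 32 - δ), mul_nonneg hd hσ.le,
    mul_nonneg (mul_nonneg hd hσ.le) hσ.le]

lemma div_le_card_swap_unbalanced (hK : 1 ≤ K) (hσ : 0 < σ) (hσ2 : σ ≤ 1 / 2)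
    (hrδ : r * δ ≤ σ / (32 * K)) (hr : 0 < r) (hn : 32 * r ≤ σ * n) (hH : H ⊆ Kn n r)
    (hR : propR r (range n) H δ K) (hZ : Z ∈ powersetCard r (range n)) (hx : x ∈ Z)
    (hy : y ∈ lowVertices r n H Z x σ) :
    σ * avgDeg r (range n) H / (2 * K) ≤
      #{A ∈ H | x ∈ A ∧ y ∉ A ∧
        insert y (A.erase x) ∈ unbalancedSets r (range n \ Z) (minus H Z) δ} := by
  obtain ⟨-, hdeg, hcodeg⟩ := hR
  obtain ⟨hZn, hZr⟩ := mem_powersetCard.1 hZ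
  obtain ⟨hyn, hyZ⟩ := mem_sdiff.1 (mem_filter.1 hy).1
  have hD := (pos_of_mem_lowVertices hy).2
  set D := avgDeg r (range n) H
  have hK0 : 0 < K := by linarith
  have hrR : (1 : ℝ) ≤ r := by exact_mod_cast hr
  have hδ : δ ≤ σ / 32 := by
    have : σ / (32 * K) ≤ σ / 32 := div_le_div_of_nonneg_left hσ.le (by norm_num) (by linarith)
    nlinarith
  have ha := card_swap_balanced_le hσ hσ2 hδ hr hn hH hZ hx hy
  have hsplit := (Nat.cast_le (α := ℝ)).2
    (deg_le_add_codeg H (unbalancedSets r (range n \ Z) (minus H Z) δ) Z x y)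
  push_cast at hsplit
  have hcodZ : ∑ z ∈ Z.erase x, (codeg H x z : ℝ) ≤ ((r : ℝ) - 1) * (δ * D) := by
    calc ∑ z ∈ Z.erase x, (codeg H x z : ℝ) ≤ ∑ _z ∈ Z.erase x, δ * D := sum_le_sum fun z hz =>
          hcodeg x (hZn hx) z (hZn (mem_of_mem_erase hz)) (ne_of_mem_erase hz).symm
      _ = ((r : ℝ) - 1) * (δ * D) := by
          rw [sum_const, card_erase_of_mem hx, hZr, nsmul_eq_mul, Nat.cast_pred hr]
  have hcody := hcodeg x (hZn hx) y hyn (ne_of_mem_of_not_mem hx hyZ)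
  have hdK : D ≤ K * deg H x := by
    have := (hdeg x (hZn hx)).2
    rwa [div_le_iff₀ hK0, mul_comm] at this
  have hrδD : 32 * K * (r * δ) * D ≤ σ * D := by
    rw [le_div_iff₀ (by positivity), mul_comm] at hrδ
    exact mul_le_mul_of_nonneg_right hrδ hD.le
  have hb : 3 * σ / 4 * deg H x - r * δ * D ≤
      #{A ∈ H | x ∈ A ∧ y ∉ A ∧
        insert y (A.erase x) ∈ unbalancedSets r (range n \ Z) (minus H Z) δ} := by
    linarith
  rw [div_le_iff₀ (by positivity)]
  nlinarith [mul_le_mul_of_nonneg_left hb (by positivity : (0 : ℝ) ≤ 2 * K),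
    mul_le_mul_of_nonneg_left hdK hσ.le]

lemma sum_swapCount_gt (hK : 1 ≤ K) (hσ : 0 < σ) (hσ2 : σ ≤ 1 / 2)
    (hrδ : r * δ ≤ σ / (32 * K)) (hr : 0 < r) (hn : 32 * r ≤ σ * n) (hH : H ⊆ Kn n r)
    (hR : propR r (range n) H δ K) (hZ : Z ∈ powersetCard r (range n)) (hx : x ∈ Z)
    (hlow : σ * n < #(lowVertices r n H Z x σ)) :
    σ ^ 2 * r * #H / (2 * K) < ∑ A ∈ H,
      (swapCount (unbalancedSets r (range n \ Z) (minus H Z) δ) (range n \ Z) x A : ℝ) := by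
  have hn0 : (0 : ℝ) < n := by
    have : (0 : ℝ) < r := by exact_mod_cast hr
    nlinarith
  have hK0 : 0 < K := by linarith
  set B := unbalancedSets r (range n \ Z) (minus H Z) δ
  calc σ ^ 2 * r * #H / (2 * K) = σ * n * (σ * avgDeg r (range n) H / (2 * K)) := by
        rw [avgDeg, card_range]; field_simp
    _ < #(lowVertices r n H Z x σ) * (σ * avgDeg r (range n) H / (2 * K)) := by
        refine mul_lt_mul_of_pos_right hlow (div_pos (mul_pos hσ ?_) (by positivity))
        obtain ⟨y, hy⟩ :=
          card_pos.1 (by exact_mod_cast (by positivity : (0 : ℝ) ≤ σ * n).trans_lt hlow)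
        exact (pos_of_mem_lowVertices hy).2
    _ ≤ ∑ y ∈ lowVertices r n H Z x σ,
        (#{A ∈ H | x ∈ A ∧ y ∉ A ∧ insert y (A.erase x) ∈ B} : ℝ) := by
        rw [← nsmul_eq_mul, ← sum_const]
        exact sum_le_sum fun y hy => div_le_card_swap_unbalanced hK hσ hσ2 hrδ hr hn hH hR hZ hx hy
    _ ≤ ∑ y ∈ range n \ Z, (#{A ∈ H | x ∈ A ∧ y ∉ A ∧ insert y (A.erase x) ∈ B} : ℝ) :=
        sum_le_sum_of_subset_of_nonneg (filter_subset _ _) fun _ _ _ => Nat.cast_nonneg _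
    _ = _ := by exact_mod_cast sum_card_swap_eq_sum_swapCount B H (range n \ Z) x

end Swap

/-! ### Counting bad graphs -/

abbrev IsBadGraph (r n : ℕ) (K δ σ : ℝ) (Z : Finset ℕ) (x : ℕ) (H : Finset (Finset ℕ)) : Prop :=
  propR r (range n) H δ K ∧ propF r (range n \ Z) (minus H Z) δ ∧
    σ * n < #(lowVertices r n H Z x σ)

lemma lowVertices_anti {r n : ℕ} {H : Finset (Finset ℕ)} {Z : Finset ℕ} {x : ℕ} {σ σ' : ℝ}
    (hσ : σ' ≤ σ) : lowVertices r n H Z x σ ⊆ lowVertices r n H Z x σ' := fun y hy => by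
  obtain ⟨hyW, hlow⟩ := mem_filter.1 hy
  refine mem_filter.2 ⟨hyW, fun h => hlow (le_trans ?_ h)⟩
  have := avgDeg_nonneg r (range n) H
  gcongr

lemma IsBadGraph.mono {r n : ℕ} {K δ σ σ' : ℝ} {Z : Finset ℕ} {x : ℕ} {H : Finset (Finset ℕ)}
    (hσ : σ' ≤ σ) (h : IsBadGraph r n K δ σ Z x H) : IsBadGraph r n K δ σ' Z x H :=
  ⟨h.1, h.2.1, (mul_le_mul_of_nonneg_right hσ (Nat.cast_nonneg n)).trans_lt
    (h.2.2.trans_le (by exact_mod_cast card_le_card (lowVertices_anti hσ)))⟩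

lemma card_filter_inter_ne_empty_le (H : Finset (Finset ℕ)) (Z : Finset ℕ) :
    #{A ∈ H | ¬A ∩ Z = ∅} ≤ ∑ z ∈ Z, deg H z := by
  refine (card_le_card fun A hA => ?_).trans card_biUnion_le
  obtain ⟨hAH, hAZ⟩ := mem_filter.1 hA
  obtain ⟨z, hz⟩ := nonempty_iff_ne_empty.2 hAZ
  exact mem_biUnion.2 ⟨z, (mem_inter.1 hz).2, mem_filter.2 ⟨hAH, (mem_inter.1 hz).1⟩⟩

lemma card_filter_inter_ne_empty_le_of_propR {n r : ℕ} {H : Finset (Finset ℕ)} {Z : Finset ℕ}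
    {K δ : ℝ} (hR : propR r (range n) H δ K) (hZ : Z ∈ powersetCard r (range n)) :
    (#{A ∈ H | ¬A ∩ Z = ∅} : ℝ) ≤ K * r ^ 2 * #H / n := by
  obtain ⟨hZn, hZr⟩ := mem_powersetCard.1 hZ
  calc (#{A ∈ H | ¬A ∩ Z = ∅} : ℝ) ≤ ∑ z ∈ Z, (deg H z : ℝ) := by
        exact_mod_cast card_filter_inter_ne_empty_le H Z
    _ ≤ ∑ _z ∈ Z, K * avgDeg r (range n) H := sum_le_sum fun z hz => (hR.2.1 z (hZn hz)).1
    _ = K * r ^ 2 * #H / n := by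
        rw [sum_const, hZr, nsmul_eq_mul, avgDeg, card_range]; ring

lemma sum_swapCount_unbalancedSets_le {r : ℕ} {W : Finset ℕ} {G : Finset (Finset ℕ)} {δ : ℝ}
    (hF : propF r W G δ) (E : Finset (Finset ℕ)) (Y : Finset ℕ) (x : ℕ) :
    (∑ A ∈ E, swapCount (unbalancedSets r W G δ) Y x A : ℕ) ≤ r * δ * (#W).choose r := by
  have hB : ∀ U ∈ unbalancedSets r W G δ, #U = r := fun U hU =>
    (mem_powersetCard.1 (mem_filter.1 hU).1).2
  calc ((∑ A ∈ E, swapCount (unbalancedSets r W G δ) Y x A : ℕ) : ℝ)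
      ≤ r * #(unbalancedSets r W G δ) := by exact_mod_cast sum_swapCount_le hB E Y x
    _ ≤ r * (δ * (#W).choose r) := by gcongr; exact hF
    _ = _ := by ring

lemma mul_choose_le_mul_card_filter_inter_ne_empty {n r : ℕ} {Z : Finset ℕ} {x : ℕ} (hr : 0 < r)
    (hZ : Z ⊆ range n) (hx : x ∈ Z) :
    r * n.choose r ≤ n * #{A ∈ Kn n r | ¬A ∩ Z = ∅} := by
  have hxn := hZ hx
  have hn : 0 < n := card_pos.2 ⟨x, hxn⟩ |>.trans_eq (card_range n)
  have hchoose : n * (n - 1).choose (r - 1) = r * n.choose r := by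
    have := Nat.add_one_mul_choose_eq (n - 1) (r - 1)
    rwa [Nat.sub_add_cancel hn, Nat.sub_add_cancel hr, mul_comm _ r] at this
  rw [← hchoose]
  refine Nat.mul_le_mul_left n ?_
  have hcard : #(powersetCard (r - 1) ((range n).erase x)) = (n - 1).choose (r - 1) := by
    rw [card_powersetCard, card_erase_of_mem hxn, card_range]
  rw [← hcard]
  refine card_le_card_of_injOn (insert x) (fun U hU => ?_) fun U hU U' hU' h => ?_
  · obtain ⟨hUn, hUr⟩ := mem_powersetCard.1 hU
    have hxU : x ∉ U := fun h => (mem_erase.1 (hUn h)).1 rfl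
    refine mem_filter.2 ⟨mem_powersetCard.2 ⟨insert_subset hxn fun a ha => ?_, ?_⟩, ?_⟩
    · exact mem_of_mem_erase (hUn ha)
    · rw [card_insert_of_notMem hxU, hUr, Nat.sub_add_cancel hr]
    · exact nonempty_iff_ne_empty.1 ⟨x, mem_inter.2 ⟨mem_insert_self x U, hx⟩⟩
  · have hxU : x ∉ U := fun h => (mem_erase.1 ((mem_powersetCard.1 hU).1 h)).1 rfl
    have hxU' : x ∉ U' := fun h => (mem_erase.1 ((mem_powersetCard.1 hU').1 h)).1 rfl
    rw [← erase_insert hxU, ← erase_insert hxU']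
    exact congrArg (·.erase x) h

section Fiber

variable {n r m : ℕ} {Z : Finset ℕ} {x : ℕ} {K σ δ : ℝ}

lemma sum_swapCount_filter_gt (hK : 1 ≤ K) (hσ : 0 < σ) (hσ2 : σ ≤ 1 / 2)
    (hrδ : r * δ ≤ σ / (32 * K)) (hr : 0 < r) (hn : 32 * r ≤ σ * n)
    (hZ : Z ∈ powersetCard r (range n)) (hx : x ∈ Z) {H : Finset (Finset ℕ)}
    (hH : H ∈ powersetCard m (Kn n r)) (hbad : IsBadGraph r n K δ σ Z x H) :
    σ ^ 2 * r * m / (2 * K) < ∑ A ∈ H with ¬A ∩ Z = ∅,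
      (swapCount (unbalancedSets r (range n \ Z) (minus H Z) δ) (range n \ Z) x A : ℝ) := by
  obtain ⟨hHK, rfl⟩ := mem_powersetCard.1 hH
  have hvanish : ∀ A ∈ H,
      (swapCount (unbalancedSets r (range n \ Z) (minus H Z) δ) (range n \ Z) x A : ℝ) ≠ 0 →
        ¬A ∩ Z = ∅ := fun A _ hA hAZ => hA <| by
    rw [swapCount_eq_zero_of_notMem fun hxA => notMem_empty x (hAZ ▸ mem_inter.2 ⟨hxA, hx⟩),
      Nat.cast_zero]
  rw [sum_filter_of_ne hvanish]
  exact sum_swapCount_gt hK hσ hσ2 hrδ hr hn hHK hbad.1 hZ hx hbad.2.2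

lemma sum_swapCount_mul_card_le (hK : 1 ≤ K) (hσ : 0 < σ) (hδ : 0 ≤ δ) (hr : 0 < r)
    (hZ : Z ∈ powersetCard r (range n)) (hx : x ∈ Z) {H : Finset (Finset ℕ)}
    (hH : H ∈ powersetCard m (Kn n r)) (hR : propR r (range n) H δ K)
    (hF : propF r (range n \ Z) (minus H Z) δ) {q : ℕ}
    (hqN : 2 * q ≤ #{A ∈ Kn n r | ¬A ∩ Z = ∅}) :
    ((∑ A ∈ Kn n r with ¬A ∩ Z = ∅,
        swapCount (unbalancedSets r (range n \ Z) (minus H Z) δ) (range n \ Z) x A : ℕ) : ℝ) *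
        #{A ∈ H | ¬A ∩ Z = ∅} ≤
      16 * K ^ 2 * r * δ / σ ^ 2 *
        (σ ^ 2 * r * m / (2 * K) / 4 * (#{A ∈ Kn n r | ¬A ∩ Z = ∅} - q)) := by
  set N := #{A ∈ Kn n r | ¬A ∩ Z = ∅}
  obtain ⟨hZn, hZr⟩ := mem_powersetCard.1 hZ
  have hK0 : 0 < K := by linarith
  have hn0 : (0 : ℝ) < n := by
    exact_mod_cast card_pos.2 ⟨x, hZn hx⟩ |>.trans_eq (card_range n)
  have hW := sum_swapCount_unbalancedSets_le hF (Kn n r |>.filter (¬· ∩ Z = ∅)) (range n \ Z) x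
  rw [card_sdiff_of_subset hZn, card_range, hZr] at hW
  have hs := card_filter_inter_ne_empty_le_of_propR hR hZ
  rw [(mem_powersetCard.1 hH).2] at hs
  have hNr : (r * n.choose r : ℝ) ≤ N * n := by
    rw [mul_comm (N : ℝ)]; exact_mod_cast mul_choose_le_mul_card_filter_inter_ne_empty hr hZn hx
  have hqN' : (2 * q : ℝ) ≤ N := by exact_mod_cast hqN
  calc _ ≤ r * δ * n.choose r * (K * r ^ 2 * m / n) := by
        gcongr
        exact hW.trans (by gcongr; exact n.sub_le r)
    _ = K * r ^ 2 * δ * m * (r * n.choose r / n) := by ring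
    _ ≤ K * r ^ 2 * δ * m * N := by gcongr; rwa [div_le_iff₀ hn0]
    _ ≤ K * r ^ 2 * δ * m * (2 * (N - q)) := by gcongr; linarith
    _ = _ := by field_simp; ring

open scoped Classical in
lemma card_isBadGraph_fiber_le_card_sum_gt (hK : 1 ≤ K) (hσ : 0 < σ) (hσ2 : σ ≤ 1 / 2)
    (hrδ : r * δ ≤ σ / (32 * K)) (hr : 0 < r) (hn : 32 * r ≤ σ * n)
    (hZ : Z ∈ powersetCard r (range n)) (hx : x ∈ Z) (G : Finset (Finset ℕ)) :
    #{H ∈ powersetCard m (Kn n r) | IsBadGraph r n K δ σ Z x H ∧ minus H Z = G} ≤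
      #{T ∈ powersetCard (m - #G) {A ∈ Kn n r | ¬A ∩ Z = ∅} | σ ^ 2 * r * m / (2 * K) <
        ∑ A ∈ T, (swapCount (unbalancedSets r (range n \ Z) G δ) (range n \ Z) x A : ℝ)} := by
  refine card_le_card_of_injOn (fun H => {A ∈ H | ¬A ∩ Z = ∅}) (fun H hH => ?_)
    fun H hH H' hH' h => ?_
  · obtain ⟨hHS, hbad, rfl⟩ := mem_filter.1 hH
    exact mem_filter.2 ⟨filter_not_mem_powersetCard hHS,
      sum_swapCount_filter_gt hK hσ hσ2 hrδ hr hn hZ hx hHS hbad⟩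
  · exact eq_of_filter_eq_of_filter_not_eq (p := (· ∩ Z = ∅))
      (((mem_filter.1 hH).2.2).trans (mem_filter.1 hH').2.2.symm) h

open scoped Classical in
lemma card_isBadGraph_fiber_le (hK : 1 ≤ K) (hσ : 0 < σ) (hσ2 : σ ≤ 1 / 2) (hδ : 0 ≤ δ)
    (hrδ : r * δ ≤ σ / (32 * K)) (hr : 0 < r) (hn : 32 * r ≤ σ * n) (hm : 0 < m)
    (hZ : Z ∈ powersetCard r (range n)) (hx : x ∈ Z) {q : ℕ}
    (hq : q * n ≤ 3 / 4 * (σ ^ 2 * r * m / (2 * K)))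
    (hqN : 2 * q ≤ #{A ∈ Kn n r | ¬A ∩ Z = ∅}) (G : Finset (Finset ℕ)) :
    (#{H ∈ powersetCard m (Kn n r) | IsBadGraph r n K δ σ Z x H ∧ minus H Z = G} : ℝ) ≤
      (16 * K ^ 2 * r * δ / σ ^ 2) ^ q * #{H ∈ powersetCard m (Kn n r) | minus H Z = G} := by
  set t := σ ^ 2 * r * m / (2 * K)
  set w := swapCount (unbalancedSets r (range n \ Z) G δ) (range n \ Z) x
  have ht : 0 < t := div_pos (mul_pos (mul_pos (pow_pos hσ 2) (by exact_mod_cast hr))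
    (by exact_mod_cast hm)) (by linarith)
  obtain hempty | ⟨H₀, hH₀⟩ :=
    eq_empty_or_nonempty {H ∈ powersetCard m (Kn n r) | IsBadGraph r n K δ σ Z x H ∧ minus H Z = G}
  · rw [hempty, card_empty, Nat.cast_zero]; positivity
  obtain ⟨hH₀S, hbad, rfl⟩ := mem_filter.1 hH₀
  obtain ⟨hH₀K, hH₀m⟩ := mem_powersetCard.1 hH₀S
  obtain ⟨hT₀E, hT₀s⟩ : {A ∈ H₀ | ¬A ∩ Z = ∅} ⊆ {A ∈ Kn n r | ¬A ∩ Z = ∅} ∧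
      #{A ∈ H₀ | ¬A ∩ Z = ∅} = m - #(minus H₀ Z) :=
    mem_powersetCard.1 (filter_not_mem_powersetCard hH₀S)
  set s := m - #(minus H₀ Z)
  have hw : ∀ A, w A ≤ n := fun A => (swapCount_le_card _ _ _ A).trans
    ((card_le_card sdiff_subset).trans (card_range n).le)
  have hqs : q < s := by
    have hsum := sum_swapCount_filter_gt hK hσ hσ2 hrδ hr hn hZ hx hH₀S hbad
    have hsn : ∑ A ∈ H₀ with ¬A ∩ Z = ∅, (w A : ℝ) ≤ s * n := by
      rw [← hT₀s, ← nsmul_eq_mul, ← sum_const]; exact sum_le_sum fun A _ => by exact_mod_cast hw A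
    have : (q : ℝ) * n < s * n := by linarith
    exact_mod_cast lt_of_mul_lt_mul_right this (Nat.cast_nonneg n)
  have hθ := sum_swapCount_mul_card_le hK hσ hδ hr hZ hx hH₀S hbad.1 hbad.2.1 hqN
  rw [hT₀s] at hθ
  calc _ ≤ (#{T ∈ powersetCard s {A ∈ Kn n r | ¬A ∩ Z = ∅} | t < ∑ A ∈ T, (w A : ℝ)} : ℝ) := by
        exact_mod_cast card_isBadGraph_fiber_le_card_sum_gt hK hσ hσ2 hrδ hr hn hZ hx _
    _ ≤ _ * (#{A ∈ Kn n r | ¬A ∩ Z = ∅}).choose s :=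
        card_filter_sum_gt_le w hw hqs (hT₀s ▸ card_le_card hT₀E) ht hq hθ
    _ ≤ _ := by
        gcongr
        exact choose_le_card_filter_eq (filter_subset_filter _ hH₀K)
          (hH₀m ▸ card_le_card (filter_subset _ _))

end Fiber

section Count

variable {n r m : ℕ} {Z : Finset ℕ} {x : ℕ} {K σ δ : ℝ}

lemma two_mul_ceil_le_card_filter_inter_ne_empty (hK : 1 ≤ K) (hσ : 0 < σ) (hσ2 : σ ≤ 1 / 2)
    (hr : 0 < r) (hn : 0 < n) (hlog : 8 * K / σ ^ 2 ≤ Real.log n)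
    (hm : n * Real.log n < r * m) (hmC : m ≤ n.choose r)
    (hZ : Z ∈ powersetCard r (range n)) (hx : x ∈ Z) :
    2 * ⌈σ ^ 2 * r * m / (2 * K) / (2 * n)⌉₊ ≤ #{A ∈ Kn n r | ¬A ∩ Z = ∅} := by
  set N := #{A ∈ Kn n r | ¬A ∩ Z = ∅}
  have hK0 : 0 < K := by linarith
  have hn0 : (0 : ℝ) < n := by exact_mod_cast hn
  have hN : (r * m : ℝ) ≤ n * N := by
    have hmC' : (m : ℝ) ≤ n.choose r := by exact_mod_cast hmC
    calc (r * m : ℝ) ≤ r * n.choose r := by gcongr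
      _ ≤ n * N := by
          exact_mod_cast
            mul_choose_le_mul_card_filter_inter_ne_empty hr (mem_powersetCard.1 hZ).1 hx
  have hσ2' : σ ^ 2 ≤ 1 / 4 := by nlinarith
  have hN32 : (32 : ℝ) ≤ N := by
    have h8 : 32 ≤ 8 * K / σ ^ 2 := by rw [le_div_iff₀ (by positivity)]; nlinarith
    have : n * Real.log n < n * N := hm.trans_le hN
    linarith [lt_of_mul_lt_mul_left this hn0.le]
  have hqN : (⌈σ ^ 2 * r * m / (2 * K) / (2 * n)⌉₊ : ℝ) < N / 16 + 1 := by
    refine (Nat.ceil_lt_add_one (by positivity)).trans_le (add_le_add_left ?_ 1)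
    have hrm : (0 : ℝ) ≤ r * m := by positivity
    rw [div_div, div_le_div_iff₀ (by positivity) (by norm_num)]
    nlinarith [mul_le_mul_of_nonneg_right hσ2' hrm, mul_le_mul_of_nonneg_left hK hrm]
  have : (2 * ⌈σ ^ 2 * r * m / (2 * K) / (2 * n)⌉₊ : ℝ) ≤ N := by linarith
  exact_mod_cast this

open scoped Classical in
lemma card_isBadGraph_le (hK : 1 ≤ K) (hσ : 0 < σ) (hσ2 : σ ≤ 1 / 2) (hδ : 0 ≤ δ)
    (hrδ : r * δ ≤ σ / (32 * K)) (hr : 0 < r) (hn : 32 * r ≤ σ * n)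
    (hlog : 8 * K / σ ^ 2 ≤ Real.log n) (hm : n * Real.log n < r * m) (hmC : m ≤ n.choose r)
    (hZ : Z ∈ powersetCard r (range n)) (hx : x ∈ Z) :
    (#{H ∈ powersetCard m (Kn n r) | IsBadGraph r n K δ σ Z x H} : ℝ) ≤
      (16 * K ^ 2 * r * δ / σ ^ 2) ^ ⌈σ ^ 2 * r * m / (2 * K) / (2 * n)⌉₊ *
        #(powersetCard m (Kn n r)) := by
  set t := σ ^ 2 * r * m / (2 * K)
  have hK0 : 0 < K := by linarith
  have hrR : (1 : ℝ) ≤ r := by exact_mod_cast hr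
  have hn0 : (0 : ℝ) < n := by nlinarith
  have hlog0 : 0 < Real.log n := lt_of_lt_of_le (by positivity) hlog
  have hm0 : 0 < m := by
    have : (0 : ℝ) < r * m := lt_trans (by positivity) hm
    exact_mod_cast pos_of_mul_pos_right this (by positivity)
  have ht : 4 * n ≤ t := by
    have : 8 * K ≤ σ ^ 2 * Real.log n := by
      rw [div_le_iff₀ (by positivity)] at hlog; linarith
    rw [le_div_iff₀ (by positivity)]
    nlinarith [mul_le_mul_of_nonneg_left hm.le (sq_nonneg σ)]
  have hq : ⌈t / (2 * n)⌉₊ * n ≤ 3 / 4 * t := by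
    have := mul_lt_mul_of_pos_right (Nat.ceil_lt_add_one (by positivity : 0 ≤ t / (2 * n))) hn0
    rw [add_mul, div_mul_eq_mul_div, mul_div_mul_right _ _ hn0.ne'] at this
    linarith
  exact card_filter_le_mul_of_fiberwise (minus · Z) fun G =>
    card_isBadGraph_fiber_le hK hσ hσ2 hδ hrδ hr hn hm0 hZ hx hq
      (two_mul_ceil_le_card_filter_inter_ne_empty hK hσ hσ2 hr (by exact_mod_cast hn0) hlog hm hmC
        hZ hx) G

end Count

lemma pow_le_rpow_neg_of_le_exp {θ c k : ℝ} {q n : ℕ} (hθ : 0 ≤ θ) (hθc : θ ≤ Real.exp (-c))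
    (hn : 0 < n) (hq : k * Real.log n ≤ c * q) : θ ^ q ≤ (n : ℝ) ^ (-k) :=
  calc θ ^ q ≤ Real.exp (-c) ^ q := pow_le_pow_left₀ hθ hθc q
    _ = Real.exp (-(c * q)) := by rw [← Real.exp_nat_mul]; ring_nf
    _ ≤ Real.exp (Real.log n * (-k)) := Real.exp_le_exp.2 (by linarith)
    _ = (n : ℝ) ^ (-k) := (Real.rpow_def_of_pos (by positivity) _).symm

lemma mul_log_le_mul_ceil {n r m : ℕ} {K σ k : ℝ} (hK : 0 < K) (hσ : 0 < σ) (hk : 0 < k)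
    (hn : (0 : ℝ) < n) (hm : n * Real.log n < r * m) :
    k * Real.log n ≤ 4 * K * k / σ ^ 2 * ⌈σ ^ 2 * r * m / (2 * K) / (2 * n)⌉₊ := by
  calc k * Real.log n = 4 * K * k / σ ^ 2 * (σ ^ 2 * Real.log n / (4 * K)) := by field_simp
    _ ≤ 4 * K * k / σ ^ 2 * (σ ^ 2 * r * m / (2 * K) / (2 * n)) := by
        refine mul_le_mul_of_nonneg_left ?_ (by positivity)
        rw [div_div, div_le_div_iff₀ (by positivity) (by positivity)]
        nlinarith [mul_lt_mul_of_pos_left hm (by positivity : (0 : ℝ) < σ ^ 2 * (4 * K))]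
    _ ≤ _ := mul_le_mul_of_nonneg_left (Nat.le_ceil _) (by positivity)

open Filter Topology in
open scoped Classical in
lemma exists_card_isBadGraph_div_le {r : ℕ} (hr : 0 < r) {ε K : ℝ} (hε : 0 < ε) (hK : 1 ≤ K)
    {δ : ℕ → ℝ} (hδpos : ∀ n, 0 < δ n) (hδ : Tendsto δ atTop (𝓝 0)) {σ k : ℝ} (hσ : 0 < σ)
    (hσ2 : σ ≤ 1 / 2) (hk : 0 < k) :
    ∃ n₀ : ℕ, ∀ n ≥ n₀, ∀ m : ℕ, (1 + ε) * ((n : ℝ) / r) * Real.log n < m → m ≤ n.choose r →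
      ∀ Z ∈ powersetCard r (range n), ∀ x ∈ Z,
        (#{H ∈ powersetCard m (Kn n r) | IsBadGraph r n K (δ n) σ Z x H} : ℝ) /
          #(powersetCard m (Kn n r)) ≤ (n : ℝ) ^ (-k) := by
  have hK0 : 0 < K := by linarith
  have hrR : (0 : ℝ) < r := by exact_mod_cast hr
  have hev : ∀ᶠ n : ℕ in atTop, r * δ n ≤ σ / (32 * K) ∧
      16 * K ^ 2 * r * δ n / σ ^ 2 ≤ Real.exp (-(4 * K * k / σ ^ 2)) ∧ 8 * K / σ ^ 2 ≤ Real.log n ∧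
      32 * r ≤ σ * n := by
    refine ((hδ.const_mul (r : ℝ)).eventually (ge_mem_nhds ?_)).and <|
      (((hδ.const_mul (16 * K ^ 2 * r)).div_const (σ ^ 2)).eventually (ge_mem_nhds ?_)).and <|
      ((Real.tendsto_log_atTop.comp tendsto_natCast_atTop_atTop).eventually_ge_atTop _).and
      ((tendsto_natCast_atTop_atTop.const_mul_atTop hσ).eventually_ge_atTop _)
    · rw [mul_zero]; positivity
    · rw [mul_zero, zero_div]; exact Real.exp_pos _
  obtain ⟨n₀, hn₀⟩ := eventually_atTop.1 hev
  refine ⟨n₀, fun n hn m hm hmC Z hZ x hx => ?_⟩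
  obtain ⟨hrδ, hθ, hlog, hσn⟩ := hn₀ n hn
  have hn0 : (0 : ℝ) < n := by nlinarith
  have hlog0 : 0 ≤ Real.log n := (by positivity : 0 ≤ 8 * K / σ ^ 2).trans hlog
  have hrm : n * Real.log n < r * m := by
    have := mul_lt_mul_of_pos_left hm hrR
    rw [show (r : ℝ) * ((1 + ε) * (n / r) * Real.log n) = (1 + ε) * (n * Real.log n) by
      field_simp] at this
    nlinarith [mul_nonneg hn0.le hlog0]
  have hS : (0 : ℝ) < #(powersetCard m (Kn n r)) := by
    rw [Kn, card_powersetCard, card_powersetCard, card_range]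
    exact_mod_cast Nat.choose_pos hmC
  rw [div_le_iff₀ hS]
  refine (card_isBadGraph_le hK hσ hσ2 (hδpos n).le hrδ hr hσn hlog hrm hmC hZ hx).trans
    (mul_le_mul_of_nonneg_right (pow_le_rpow_neg_of_le_exp
      (div_nonneg (mul_nonneg (by positivity) (hδpos n).le) (sq_nonneg σ)) hθ
      (by exact_mod_cast hn0) ?_) hS.le)
  exact mul_log_le_mul_ceil hK0 hσ hk hn0 hrm

open scoped Classical in
/-- **Lemma 7.3 (Lemma C).** For any `r`-subset `Z` of `[n]` and `x ∈ Z`: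
with probability at least `1 − n^{−k}`, if `H = H^r_{n,m}` satisfies `R(δ(n),K)`
and `H − Z` (on `[n]∖Z`) satisfies `F(δ(n))`, then all but at most `σn` vertices
`y ∈ [n]∖Z` satisfy `Φ(H−((Z∖{x})∪{y})) ≥ (1−σ)·Φ(H−Z)·d_H(x)/D_H`. -/
theorem lemma_C (r : ℕ) (hr : 3 ≤ r) (ε : ℝ) (hε : 0 < ε) (K : ℝ) (hK : 1 ≤ K)
    (δ : ℕ → ℝ) (hδpos : ∀ n, 0 < δ n)
    (hδ : Filter.Tendsto δ Filter.atTop (nhds 0)) :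
    ∀ σ : ℝ, 0 < σ → ∀ k : ℝ, 0 < k → ∃ n₀ : ℕ, ∀ n : ℕ, n₀ ≤ n → r ∣ n →
      ∀ m : ℕ, (1 + ε) * ((n : ℝ) / r) * Real.log n < m → m ≤ n.choose r →
      ∀ Z ∈ Finset.powersetCard r (Finset.range n), ∀ x ∈ Z,
      (((Finset.powersetCard m (Kn n r)).filter
          (fun H => propR r (Finset.range n) H (δ n) K ∧
            propF r (Finset.range n \ Z) (minus H Z) (δ n) ∧
            σ * n <
              (((Finset.range n \ Z).filter (fun y =>
                  ¬((1 - σ) * (phiSub (Finset.range n) H Z : ℝ) * (deg H x : ℝ) /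
                      avgDeg r (Finset.range n) H ≤
                    (phiSub (Finset.range n) H (insert y (Z.erase x)) : ℝ)))).card : ℝ))).card : ℝ) /
        ((Finset.powersetCard m (Kn n r)).card : ℝ) ≤ (n : ℝ) ^ (-k) := by
  intro σ hσ k hk
  -- the event shrinks as `σ` grows, so it suffices to treat `min σ (1 / 2)`
  obtain ⟨n₀, hn₀⟩ := exists_card_isBadGraph_div_le (by omega : 0 < r) hε hK hδpos hδ
    (lt_min hσ one_half_pos) (min_le_right σ (1 / 2)) hk
  refine ⟨n₀, fun n hn _ m hm hmC Z hZ x hx => le_trans ?_ (hn₀ n hn m hm hmC Z hZ x hx)⟩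
  refine div_le_div_of_nonneg_right ?_ (Nat.cast_nonneg _)
  exact_mod_cast card_le_card <| monotone_filter_right _ fun H _ hH =>
    IsBadGraph.mono (min_le_left σ (1 / 2)) hH
end

section
/- Fix an integer r ≥ 3 and a real K ≥ 1. There exist C > 0, σ₀ > 0 and n₀ such that for every n ≥ n₀ divisible by r and every nonempty r-graph H on [n] having at least one perfect matching: if H satisfies R(σ₀,K), F(σ₀) and C(σ₀,σ₀), then H satisfies B(C). -/
open Finset

/-!
Suppose `Φ(H − A) > C·Φ(H)/D` for an edge `A`. Property `C` lets us replace a vertex `x` of `A` by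
all but `σn` vertices `y`, losing at most the factor `β = (1 − σ)/K` (as `d(x) ≥ D/K`); the
threshold `Φ(H)e^{−σn}` of `C` stays below `Φ(H)/D` because `D ≤ n^r ≤ e^{σn}`. Replacing the `r`
vertices of `A` one after another, and noting that each new set arises from at most `r` old ones,
gives at least `((n − r − σn)/r)^r ≥ (n/2r)^r` sets `U` with `Φ(H − U) ≥ β^r Φ(H − A)`. With
`C = 2(2K)^r` we have `β^r C ≥ 2`, so all of them violate `F(σ)`; but `σ = 1/(2(2r)^r)` makes
`(n/2r)^r = 2σn^r > σ·C(n,r)`.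
-/

lemma eventually_pow_le_exp_mul (r : ℕ) {σ : ℝ} (hσ : 0 < σ) :
    ∀ᶠ n : ℕ in Filter.atTop, (n : ℝ) ^ r ≤ Real.exp (σ * n) := by
  have h := (isLittleO_pow_exp_pos_mul_atTop r hσ).bound one_pos
  filter_upwards [tendsto_natCast_atTop_atTop.eventually h] with n hn
  simpa [abs_pow, Real.abs_exp] using hn

lemma sum_card_le_mul_card_image_insert_erase {α : Type*} [DecidableEq α]
    {S : Finset (Finset α)} {x : α} {r : ℕ} (good : Finset α → Finset α)
    (hS : ∀ Z ∈ S, x ∈ Z ∧ #Z ≤ r ∧ Disjoint (good Z) Z) :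
    ∑ Z ∈ S, #(good Z) ≤ r * #((S.sigma good).image fun p => insert p.2 (p.1.erase x)) := by
  rw [← card_sigma]
  refine card_le_mul_card_image _ _ fun b hb => ?_
  obtain ⟨p, hp, rfl⟩ := mem_image.mp hb
  have recover : ∀ q ∈ S.sigma good, insert x ((insert q.2 (q.1.erase x)).erase q.2) = q.1 := by
    intro q hq
    obtain ⟨hqS, hqy⟩ := mem_sigma.mp hq
    have hy : q.2 ∉ q.1.erase x :=
      fun h => disjoint_left.mp (hS _ hqS).2.2 hqy (mem_of_mem_erase h)
    rw [erase_insert hy, insert_erase (hS _ hqS).1]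
  obtain ⟨hpS, -⟩ := mem_sigma.mp hp
  calc #{q ∈ S.sigma good | insert q.2 (q.1.erase x) = insert p.2 (p.1.erase x)}
      ≤ #(insert p.2 (p.1.erase x)) := by
        refine card_le_card_of_injOn Sigma.snd (fun q hq => ?_) fun q hq q' hq' hqq' => ?_
        · rw [mem_coe, mem_filter] at hq
          exact hq.2 ▸ mem_insert_self _ _
        · rw [mem_coe, mem_filter] at hq hq'
          refine Sigma.ext ?_ (heq_of_eq hqq')
          rw [← recover q hq.1, ← recover q' hq'.1, hq.2, hq'.2, hqq']
    _ ≤ #(p.1.erase x) + 1 := card_insert_le _ _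
    _ ≤ r := by rw [card_erase_add_one (hS _ hpS).1]; exact (hS _ hpS).2.1

lemma exists_switched_family {r : ℕ} {W : Finset ℕ} {S : Finset (Finset ℕ)} {x : ℕ} {g : ℝ}
    (good : Finset ℕ → Finset ℕ) (hSW : S ⊆ powersetCard r W) (hx : ∀ Z ∈ S, x ∈ Z)
    (hgood : ∀ Z ∈ S, good Z ⊆ W \ Z) (hg : ∀ Z ∈ S, g ≤ #(good Z)) :
    ∃ T ⊆ powersetCard r W, (∀ Z' ∈ T, ∃ Z ∈ S, ∃ y ∈ good Z, Z' = insert y (Z.erase x)) ∧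
      #S * g ≤ r * #T := by
  have hZ : ∀ Z ∈ S, Z ⊆ W ∧ #Z = r := fun Z hZ => mem_powersetCard.mp (hSW hZ)
  refine ⟨(S.sigma good).image fun p => insert p.2 (p.1.erase x), fun Z' hZ' => ?_,
    fun Z' hZ' => ?_, ?_⟩
  · obtain ⟨⟨Z, y⟩, hp, rfl⟩ := mem_image.mp hZ'
    obtain ⟨hZS, hy⟩ := mem_sigma.mp hp
    obtain ⟨hyW, hyZ⟩ := mem_sdiff.mp (hgood Z hZS hy)
    refine mem_powersetCard.mpr ⟨insert_subset hyW ((erase_subset _ _).trans (hZ Z hZS).1), ?_⟩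
    rw [card_insert_of_notMem fun h => hyZ (mem_of_mem_erase h), card_erase_add_one (hx Z hZS),
      (hZ Z hZS).2]
  · obtain ⟨⟨Z, y⟩, hp, rfl⟩ := mem_image.mp hZ'
    obtain ⟨hZS, hy⟩ := mem_sigma.mp hp
    exact ⟨Z, hZS, y, hy, rfl⟩
  · have hsum := sum_card_le_mul_card_image_insert_erase (x := x) (r := r) good fun Z hZS =>
      ⟨hx Z hZS, (hZ Z hZS).2.le, disjoint_left.mpr fun y hy => (mem_sdiff.mp (hgood Z hZS hy)).2⟩
    calc #S * g = ∑ _Z ∈ S, g := by rw [sum_const, nsmul_eq_mul]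
      _ ≤ ∑ Z ∈ S, (#(good Z) : ℝ) := sum_le_sum hg
      _ ≤ _ := by exact_mod_cast hsum

lemma sub_le_card_filter_of_propC {r : ℕ} {W : Finset ℕ} {G : Finset (Finset ℕ)} {δ σ K : ℝ}
    (hC : propC r W G δ σ) (hD : 0 < avgDeg r W G) (hσ : σ ≤ 1) {Z : Finset ℕ}
    (hZ : Z ∈ powersetCard r W)
    (hΦZ : (pmCount W G : ℝ) * Real.exp (-δ * #W) ≤ phiSub W G Z) {x : ℕ} (hx : x ∈ Z)
    (hdeg : avgDeg r W G / K ≤ deg G x) :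
    (#W : ℝ) - r - σ * #W ≤
      #{y ∈ W \ Z | (1 - σ) / K * phiSub W G Z ≤ phiSub W G (insert y (Z.erase x))} := by
  have hbad := hC Z hZ hΦZ x hx
  have hsplit := card_filter_add_card_filter_not (s := W \ Z) fun y =>
    (1 - σ) * phiSub W G Z * deg G x / avgDeg r W G ≤ phiSub W G (insert y (Z.erase x))
  have hWZ : (#(W \ Z) : ℝ) = #W - r := by
    obtain ⟨hZW, hZr⟩ := mem_powersetCard.mp hZ
    rw [card_sdiff_of_subset hZW, hZr, Nat.cast_sub (hZr ▸ card_le_card hZW)]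
  have hmono : #{y ∈ W \ Z | (1 - σ) * phiSub W G Z * deg G x / avgDeg r W G ≤
      phiSub W G (insert y (Z.erase x))} ≤
      #{y ∈ W \ Z | (1 - σ) / K * phiSub W G Z ≤ phiSub W G (insert y (Z.erase x))} := by
    refine card_le_card (monotone_filter_right _ fun y _ hy => le_trans ?_ hy)
    rw [le_div_iff₀ hD]
    calc (1 - σ) / K * phiSub W G Z * avgDeg r W G
        = (1 - σ) * phiSub W G Z * (avgDeg r W G / K) := by ring
      _ ≤ (1 - σ) * phiSub W G Z * deg G x :=
        mul_le_mul_of_nonneg_left hdeg (mul_nonneg (by linarith) (Nat.cast_nonneg _))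
  have hsplitR := congrArg (Nat.cast (R := ℝ)) hsplit
  push_cast at hsplitR
  have := (Nat.cast_le (α := ℝ)).mpr hmono
  linarith

lemma exists_large_family_of_propC {r : ℕ} {W : Finset ℕ} {G : Finset (Finset ℕ)} {σ K : ℝ}
    (hC : propC r W G σ σ) (hD : 0 < avgDeg r W G) (hσ0 : 0 ≤ σ) (hσ : σ ≤ 1) (hK : 1 ≤ K)
    (hdeg : ∀ x ∈ W, avgDeg r W G / K ≤ deg G x) (hg : r + σ * #W ≤ #W)
    {A : Finset ℕ} (hA : A ∈ powersetCard r W)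
    (hΦA : (pmCount W G : ℝ) * Real.exp (-σ * #W) ≤ ((1 - σ) / K) ^ r * phiSub W G A) :
    ∃ S ⊆ powersetCard r W, (∀ Z ∈ S, ((1 - σ) / K) ^ r * phiSub W G A ≤ phiSub W G Z) ∧
      (((#W : ℝ) - r - σ * #W) / r) ^ r ≤ #S := by
  set β := (1 - σ) / K
  set g : ℝ := #W - r - σ * #W
  have hβ0 : 0 ≤ β := div_nonneg (by linarith) (by linarith)
  have hβ1 : β ≤ 1 := div_le_one_of_le₀ (by linarith) (by linarith)
  obtain ⟨hAW, hAr⟩ := mem_powersetCard.mp hA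
  -- `P` is the set of vertices of `A` replaced so far.
  suffices key : ∀ P ⊆ A, ∃ S ⊆ powersetCard r W,
      (∀ Z ∈ S, A \ P ⊆ Z ∧ β ^ #P * phiSub W G A ≤ phiSub W G Z) ∧ (g / r) ^ #P ≤ #S by
    obtain ⟨S, hSW, hS, hScard⟩ := key A subset_rfl
    exact ⟨S, hSW, fun Z hZ => hAr ▸ (hS Z hZ).2, hAr ▸ hScard⟩
  intro P hP
  induction P using Finset.induction with
  | empty => exact ⟨{A}, by simpa using hA, by simp, by simp⟩
  | insert x P hxP ih =>
    have hxA : x ∈ A := hP (mem_insert_self x P)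
    have hPA : P ⊆ A := (subset_insert x P).trans hP
    obtain ⟨S, hSW, hS, hScard⟩ := ih hPA
    have hxS : ∀ Z ∈ S, x ∈ Z := fun Z hZ => (hS Z hZ).1 (mem_sdiff.mpr ⟨hxA, hxP⟩)
    have hgood : ∀ Z ∈ S, g ≤ #{y ∈ W \ Z | β * phiSub W G Z ≤ phiSub W G (insert y (Z.erase x))} :=
      fun Z hZ => sub_le_card_filter_of_propC hC hD hσ (hSW hZ) (hΦA.trans (by
        calc β ^ r * phiSub W G A ≤ β ^ #P * phiSub W G A :=
              mul_le_mul_of_nonneg_right (pow_le_pow_of_le_one hβ0 hβ1 (hAr ▸ card_le_card hPA))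
                (Nat.cast_nonneg _)
          _ ≤ _ := (hS Z hZ).2)) (hxS Z hZ) (hdeg x (hAW hxA))
    obtain ⟨T, hTW, hT, hTcard⟩ := exists_switched_family _ hSW hxS (fun _ _ => filter_subset _ _)
      hgood
    refine ⟨T, hTW, fun Z' hZ' => ?_, ?_⟩
    · obtain ⟨Z, hZS, y, hy, rfl⟩ := hT Z' hZ'
      refine ⟨fun v hv => ?_, ?_⟩
      · obtain ⟨hvA, hvxP⟩ := mem_sdiff.mp hv
        rw [mem_insert, not_or] at hvxP
        exact mem_insert_of_mem (mem_erase.mpr ⟨hvxP.1, (hS Z hZS).1 (mem_sdiff.mpr ⟨hvA, hvxP.2⟩)⟩)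
      · rw [card_insert_of_notMem hxP, pow_succ', mul_assoc]
        exact (mul_le_mul_of_nonneg_left (hS Z hZS).2 hβ0).trans (mem_filter.mp hy).2
    · have hr : (0 : ℝ) < r := by exact_mod_cast hAr ▸ card_pos.mpr ⟨x, hxA⟩
      rw [card_insert_of_notMem hxP, pow_succ, mul_div_assoc', div_le_iff₀ hr]
      calc (g / r) ^ #P * g ≤ #S * g := mul_le_mul_of_nonneg_right hScard (by linarith)
        _ ≤ _ := by linarith

lemma card_le_of_propF {r : ℕ} {W : Finset ℕ} {G : Finset (Finset ℕ)} {σ : ℝ}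
    (hF : propF r W G σ) {S : Finset (Finset ℕ)} (hSW : S ⊆ powersetCard r W)
    (hS : ∀ Z ∈ S, (1 + σ) * pmCount W G / avgDeg r W G < phiSub W G Z) :
    (#S : ℝ) ≤ σ * (#W).choose r := by
  refine le_trans (Nat.cast_le.mpr (card_le_card fun Z hZ => mem_filter.mpr ⟨hSW hZ, ?_⟩)) hF
  exact fun h => (hS Z hZ).not_ge h.2

lemma avgDeg_pos {r : ℕ} {W : Finset ℕ} {G : Finset (Finset ℕ)} (hr : 0 < r)
    (hW : W.Nonempty) (hG : G.Nonempty) : 0 < avgDeg r W G := by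
  unfold avgDeg
  have := hW.card_pos
  have := hG.card_pos
  positivity

lemma avgDeg_le_pow {n r : ℕ} {H : Finset (Finset ℕ)} (hrn : r ≤ n) (hH : H ⊆ Kn n r) :
    avgDeg r (range n) H ≤ (n : ℝ) ^ r := by
  have hHn : (#H : ℝ) ≤ (n : ℝ) ^ r := by
    have := (card_le_card hH).trans_eq (by rw [Kn, card_powersetCard, card_range])
    exact_mod_cast this.trans (Nat.choose_le_pow n r)
  unfold avgDeg
  rw [card_range]
  refine div_le_of_le_mul₀ (Nat.cast_nonneg _) (by positivity) ?_
  calc (r : ℝ) * #H ≤ n * (n : ℝ) ^ r :=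
        mul_le_mul (by exact_mod_cast hrn) hHn (Nat.cast_nonneg _) (Nat.cast_nonneg _)
    _ = (n : ℝ) ^ r * n := mul_comm _ _

lemma mul_exp_neg_le_div_avgDeg {n r : ℕ} {H : Finset (Finset ℕ)} {σ Φ : ℝ} (hrn : r ≤ n)
    (hH : H ⊆ Kn n r) (hD : 0 < avgDeg r (range n) H) (hΦ : 0 ≤ Φ)
    (hexp : (n : ℝ) ^ r ≤ Real.exp (σ * n)) :
    Φ * Real.exp (-σ * #(range n)) ≤ Φ / avgDeg r (range n) H := by
  rw [card_range, neg_mul, Real.exp_neg, ← div_eq_mul_inv]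
  exact div_le_div_of_nonneg_left hΦ hD ((avgDeg_le_pow hrn hH).trans hexp)

lemma two_mul_lt_pow_mul_of_two_mul_pow_mul_lt {σ K a b : ℝ} (r : ℕ) (hσ : σ ≤ 1 / 2)
    (hK : 0 < K) (ha : 0 ≤ a) (h : 2 * (2 * K) ^ r * a < b) :
    2 * a < ((1 - σ) / K) ^ r * b := by
  have hβ : 0 < ((1 - σ) / K) ^ r := pow_pos (div_pos (by linarith) hK) r
  have : ((1 - σ) / K) ^ r * (2 * K) ^ r = (2 * (1 - σ)) ^ r := by
    rw [← mul_pow]; congr 1; field_simp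
  have : 1 ≤ ((1 - σ) / K) ^ r * (2 * K) ^ r := this ▸ one_le_pow₀ (by linarith)
  calc 2 * a ≤ ((1 - σ) / K) ^ r * (2 * (2 * K) ^ r * a) := by nlinarith
    _ < ((1 - σ) / K) ^ r * b := mul_lt_mul_of_pos_left h hβ

noncomputable def switchingDensity (r : ℕ) : ℝ := 1 / (2 * (2 * r) ^ r)

lemma switchingDensity_pos {r : ℕ} (hr : 0 < r) : 0 < switchingDensity r := by
  unfold switchingDensity
  have : (0 : ℝ) < r := by exact_mod_cast hr
  positivity

lemma switchingDensity_le_quarter {r : ℕ} (hr : 0 < r) : switchingDensity r ≤ 1 / 4 := by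
  have hr1 : (1 : ℝ) ≤ r := by exact_mod_cast hr
  have : (2 : ℝ) ≤ (2 * r) ^ r :=
    calc (2 : ℝ) ≤ 2 * r := by linarith
      _ ≤ (2 * r) ^ r := le_self_pow₀ (by linarith) hr.ne'
  unfold switchingDensity
  gcongr
  linarith

lemma cast_add_switchingDensity_mul_le {r n : ℕ} (hr : 0 < r) (hn : 4 * r ≤ n) :
    (r : ℝ) + switchingDensity r * n ≤ n := by
  have : (4 * r : ℝ) ≤ n := by exact_mod_cast hn
  nlinarith [mul_le_mul_of_nonneg_right (switchingDensity_le_quarter hr) (Nat.cast_nonneg (α := ℝ) n)]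

lemma switchingDensity_mul_choose_lt {r n : ℕ} (hr : 0 < r) (hn : 4 * r ≤ n) :
    switchingDensity r * n.choose r < ((n - r - switchingDensity r * n) / r) ^ r := by
  set σ := switchingDensity r
  have hσ0 : 0 < σ := switchingDensity_pos hr
  have hr' : (0 : ℝ) < r := by exact_mod_cast hr
  have hn' : (4 * r : ℝ) ≤ n := by exact_mod_cast hn
  have hhalf : (n : ℝ) / (2 * r) ≤ (n - r - σ * n) / r := by
    rw [div_le_div_iff₀ (by positivity) hr']
    have : (n : ℝ) / 2 ≤ n - r - σ * n := by
      nlinarith [mul_le_mul_of_nonneg_right (switchingDensity_le_quarter hr)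
        (Nat.cast_nonneg (α := ℝ) n)]
    nlinarith
  calc σ * n.choose r ≤ σ * n ^ r :=
        mul_le_mul_of_nonneg_left (by exact_mod_cast Nat.choose_le_pow n r) hσ0.le
    _ < 2 * σ * n ^ r := by
        have : (0 : ℝ) < n ^ r := pow_pos (by linarith) r
        nlinarith
    _ = ((n : ℝ) / (2 * r)) ^ r := by
        simp only [σ, switchingDensity, div_pow]
        field_simp
    _ ≤ _ := pow_le_pow_left₀ (by positivity) hhalf r

/-- **Lemma 7.4 (Lemma RCEFB).** There are `C`, `σ₀` and `n₀` such that for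
`n ≥ n₀` divisible by `r`, any nonempty `r`-graph `H` on `[n]` with a perfect
matching that satisfies `R(σ₀,K)`, `F(σ₀)` and `C(σ₀,σ₀)` also satisfies `B(C)`. -/
theorem lemma_RCFB (r : ℕ) (hr : 3 ≤ r) (K : ℝ) (hK : 1 ≤ K) :
    ∃ C : ℝ, 0 < C ∧ ∃ σ₀ : ℝ, 0 < σ₀ ∧ ∃ n₀ : ℕ, ∀ n : ℕ, n₀ ≤ n → r ∣ n →
      ∀ H : Finset (Finset ℕ), H ⊆ Kn n r → H.Nonempty →
        0 < pmCount (Finset.range n) H →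
        propR r (Finset.range n) H σ₀ K →
        propF r (Finset.range n) H σ₀ →
        propC r (Finset.range n) H σ₀ σ₀ →
        propB r (Finset.range n) H C := by
  have hr0 : 0 < r := by omega
  set σ := switchingDensity r
  have hσ0 : 0 < σ := switchingDensity_pos hr0
  have hσ : σ ≤ 1 / 4 := switchingDensity_le_quarter hr0
  obtain ⟨N, hN⟩ := Filter.eventually_atTop.mp (eventually_pow_le_exp_mul r hσ0)
  refine ⟨2 * (2 * K) ^ r, by positivity, σ, hσ0, max (4 * r) N,
    fun n hn _ H hHK hH hΦ hR hF hC A hA => ?_⟩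
  have h4r : 4 * r ≤ n := le_of_max_le_left hn
  have hD : 0 < avgDeg r (range n) H := avgDeg_pos hr0 (nonempty_range_iff.mpr (by omega)) hH
  have hΦD : 0 < (pmCount (range n) H : ℝ) / avgDeg r (range n) H :=
    div_pos (by exact_mod_cast hΦ) hD
  by_contra! hB
  rw [mul_div_assoc] at hB
  have hΦA := two_mul_lt_pow_mul_of_two_mul_pow_mul_lt (σ := σ) r (by linarith) (by linarith) hΦD.le hB
  obtain ⟨S, hSW, hSΦ, hScard⟩ := exists_large_family_of_propC hC hD hσ0.le (by linarith) hK
    (fun x hx => (hR.2.1 x hx).2)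
    (by rw [card_range]; exact cast_add_switchingDensity_mul_le hr0 h4r) (hHK hA)
    ((mul_exp_neg_le_div_avgDeg (by omega) hHK hD (Nat.cast_nonneg _)
      (hN n (le_of_max_le_right hn))).trans (by linarith))
  have hSF := card_le_of_propF hF hSW fun Z hZ => by
    rw [mul_div_assoc]
    linarith [hSΦ Z hZ, mul_lt_mul_of_pos_right (by linarith : 1 + σ < 2) hΦD]
  rw [card_range] at hScard hSF
  linarith [switchingDensity_mul_choose_lt hr0 h4r]
end
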